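/- Let R be a specification on a set S and let P be a deterministic relation on S. Then P is correct with respect to R if and only if P is a greatest element of the relative-correctness ordering induced by R, i.e., if and only if dom(R ∩ Q) ⊆ dom(R ∩ P) for every relation Q on S. -/

import Mathlib

/-!
`P` refines `R` iff `P` is defined on `dom R` and there yields only outputs allowed by `R`.
For deterministic `P` the only output at `s` is then in `R`, so refinement is just
`dom R ⊆ dom (R ∩ P)`. Since `dom (R ∩ Q) ⊆ dom R` for every `Q`, with equality at `Q = R`,
this inclusion says precisely that `P` is maximal for relative correctness.
-/

def dom {S : Type*} (R : Set (S × S)) : Set S := {s | ∃ s', (s, s') ∈ R}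

def refines {S : Type*} (R' R : Set (S × S)) : Prop :=
  (dom R ×ˢ (Set.univ : Set S)) ∩ (dom R' ×ˢ (Set.univ : Set S)) ∩ (R ∪ R') = R

def deterministic {S : Type*} (P : Set (S × S)) : Prop :=
  ∀ s s' s'', (s, s') ∈ P → (s, s'') ∈ P → s' = s''

section Relations

variable {S : Type*} {R P Q : Set (S × S)}

theorem dom_mono (h : Q ⊆ R) : dom Q ⊆ dom R :=
  fun _ ⟨t, hst⟩ => ⟨t, h hst⟩

theorem refines_iff :
    refines P R ↔ dom R ⊆ dom P ∧ ∀ s t, s ∈ dom R → (s, t) ∈ P → (s, t) ∈ R := by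
  constructor
  · intro h
    refine ⟨fun s ⟨t, hst⟩ => ?_, fun s t hs hst => ?_⟩
    · rw [← h] at hst
      exact hst.1.2.1
    · rw [← h]
      exact ⟨⟨⟨hs, trivial⟩, ⟨t, hst⟩, trivial⟩, Or.inr hst⟩
  · rintro ⟨hdom, hout⟩
    ext ⟨s, t⟩
    constructor
    · rintro ⟨⟨⟨hsR, -⟩, -⟩, hst | hst⟩
      · exact hst
      · exact hout s t hsR hst
    · intro hst
      have hsR : s ∈ dom R := ⟨t, hst⟩
      exact ⟨⟨⟨hsR, trivial⟩, hdom hsR, trivial⟩, Or.inl hst⟩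

theorem dom_subset_dom_inter_of_refines (h : refines P R) : dom R ⊆ dom (R ∩ P) := by
  obtain ⟨hdom, hout⟩ := refines_iff.mp h
  intro s hsR
  obtain ⟨t, hst⟩ := hdom hsR
  exact ⟨t, hout s t hsR hst, hst⟩

theorem refines_iff_dom_subset_dom_inter (hP : deterministic P) :
    refines P R ↔ dom R ⊆ dom (R ∩ P) := by
  refine ⟨dom_subset_dom_inter_of_refines, fun h => refines_iff.mpr ⟨?_, ?_⟩⟩
  · exact h.trans (dom_mono Set.inter_subset_right)
  · intro s t hsR hst
    obtain ⟨u, huR, huP⟩ := h hsR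
    rwa [hP s t u hst huP]

theorem forall_dom_inter_subset_iff :
    (∀ Q : Set (S × S), dom (R ∩ Q) ⊆ dom (R ∩ P)) ↔ dom R ⊆ dom (R ∩ P) :=
  ⟨fun h => by simpa only [Set.inter_self] using h R,
    fun h _ => (dom_mono Set.inter_subset_left).trans h⟩

end Relations

/-- A deterministic program is correct with respect to `R` iff it is a greatest
element of the relative-correctness ordering induced by `R`. -/
theorem stmt_8 {S : Type*} (R P : Set (S × S)) (hP : deterministic P) :
    refines P R ↔ ∀ Q : Set (S × S), dom (R ∩ Q) ⊆ dom (R ∩ P) := by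
  rw [refines_iff_dom_subset_dom_inter hP, forall_dom_inter_subset_iff]
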